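/- If σ = {ρ(x)x : x ∈ Ω̄} is a reflector in the class A(δ), then ρ(x) ≥ δM/(1 + c_δ) for all x ∈ Ω̄, ρ is bounded above on Ω̄, and ρ is globally Lipschitz on Ω̄ with Lipschitz constant at most (M/2)·(1 + c_δ)/(1 − c_δ), i.e., |ρ(x) − ρ(y)| ≤ (M/2)·((1 + c_δ)/(1 − c_δ))·|x − y| for all x, y ∈ Ω̄. -/

import Mathlib

/-!
Writing `c t = √(1 + t²) − t`, the ellipsoid `E_d(P)` has eccentricity `ε = c (d/OP)`, and `c` is
decreasing on `[0, ∞)`, so `d ≥ δM ≥ δ·OP` forces `ε ≤ c_δ < 1`. On the sphere the polar radius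
`d/(1 − εx·m)` lies between `d/(1 + ε)` and `d/(1 − ε)`, and, thanks to the focal relation
`2εd = OP(1 − ε²)`, its Lipschitz constant `dε/(1 − ε)²` equals `OP(1 + ε)/(2(1 − ε))`, which is at
most `M(1 + c_δ)/(2(1 − c_δ))`. A reflector lies below each supporting ellipsoid and touches it,
so `ρ(y) = ρ_d(y)` gives the lower bound, `ρ ≤ ρ_d` the upper bound, and
`ρ(x) − ρ(y) ≤ ρ_d(x) − ρ_d(y)` for the ellipsoid supporting at `y` the Lipschitz bound.
-/

noncomputable section

open MeasureTheory Metric Set Filter Topology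
attribute [local instance] Classical.propDecidable

/-- Real inner product on `ℝ³`. -/
noncomputable def rinner (x y : EuclideanSpace ℝ (Fin 3)) : ℝ := inner ℝ x y

/-- Euclidean 3-space. -/
abbrev E3 : Type := EuclideanSpace ℝ (Fin 3)

/-- The unit sphere `S²` in `ℝ³`. -/
def sphere2 : Set E3 := Metric.sphere (0 : E3) 1

/-- Unit vector `m = P/OP` in the direction of `P`. -/
noncomputable def axisDir (P : E3) : E3 := ‖P‖⁻¹ • P

/-- Eccentricity `ε = √(1 + d²/OP²) − d/OP` of the ellipsoid `E_d(P)`. -/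
noncomputable def ecc (P : E3) (d : ℝ) : ℝ :=
  Real.sqrt (1 + d ^ 2 / ‖P‖ ^ 2) - d / ‖P‖

/-- Polar radius `ρ_d(x) = d/(1 − ε x·m)` of the ellipsoid `E_d(P)`. -/
noncomputable def polarRadius (P : E3) (d : ℝ) (x : E3) : ℝ :=
  d / (1 - ecc P d * rinner x (axisDir P))

/-- The constant `c_δ = √(1 + δ²) − δ`. -/
noncomputable def cconst (δ : ℝ) : ℝ := Real.sqrt (1 + δ ^ 2) - δ

/-- Outer unit normal `(x − εm)/|x − εm|` of the ellipsoid `E_d(P)` at the point `ρ_d(x)x`. -/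
noncomputable def normalVec (P : E3) (d : ℝ) (x : E3) : E3 :=
  ‖x - ecc P d • axisDir P‖⁻¹ • (x - ecc P d • axisDir P)

/-- The ellipsoid `E_d(P)` supports the surface `{ρ(x)x : x ∈ closure Ω}` at `ρ(x₀)x₀`. -/
def IsSupportingAt (Ω : Set E3) (ρ : E3 → ℝ) (P : E3) (d : ℝ) (x₀ : E3) : Prop :=
  P ≠ 0 ∧ 0 < d ∧ (∀ x ∈ closure Ω, ρ x ≤ polarRadius P d x) ∧
    ρ x₀ = polarRadius P d x₀

/-- `{ρ(x)x : x ∈ closure Ω}` is a reflector from `closure Ω` to the target `D`. -/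
def IsReflector (Ω D : Set E3) (ρ : E3 → ℝ) : Prop :=
  (∀ x ∈ closure Ω, 0 < ρ x) ∧
  ∀ x₀ ∈ closure Ω, ∃ P ∈ D, ∃ d : ℝ, IsSupportingAt Ω ρ P d x₀

/-- Tracing set `τ_σ(E)`: directions reflected into `E`. -/
def tracing (Ω : Set E3) (ρ : E3 → ℝ) (E : Set E3) : Set E3 :=
  {x | x ∈ closure Ω ∧ ∃ P ∈ E, ∃ d : ℝ, IsSupportingAt Ω ρ P d x}

/-- The class `A(δ)`: reflectors all of whose points admit a supporting ellipsoid with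
`d ≥ δ M`. -/
def InClassA (Ω D : Set E3) (ρ : E3 → ℝ) (δ M : ℝ) : Prop :=
  IsReflector Ω D ρ ∧
  ∀ x₀ ∈ closure Ω, ∃ P ∈ D, ∃ d : ℝ, δ * M ≤ d ∧ IsSupportingAt Ω ρ P d x₀

/-- The boundary `∂Ω` of `Ω` relative to the sphere `S²`. -/
def sphFrontier (Ω : Set E3) : Set E3 := closure Ω ∩ closure (sphere2 \ Ω)

/-- `D` is contained in a plane of `ℝ³`. -/
def InPlane (D : Set E3) : Prop :=
  ∃ v : E3, v ≠ 0 ∧ ∃ c : ℝ, ∀ P ∈ D, rinner P v = c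

/-- The set `S` of directions traced to two distinct target points. -/
def ambigSet (Ω D : Set E3) (ρ : E3 → ℝ) : Set E3 :=
  {x | x ∈ closure Ω ∧ ∃ P₁ ∈ D, ∃ P₂ ∈ D, P₁ ≠ P₂ ∧
    x ∈ tracing Ω ρ {P₁} ∧ x ∈ tracing Ω ρ {P₂}}

/-- A canonical selection of the outer unit normal `ν(x)` of the reflector; at every point
where the supporting ellipsoid is unique (a.e. point) this is the normal of the
supporting ellipsoid. -/
noncomputable def nuSel (Ω D : Set E3) (ρ : E3 → ℝ) (x : E3) : E3 :=
  if h : ∃ p : E3 × ℝ, p.1 ∈ D ∧ IsSupportingAt Ω ρ p.1 p.2 x then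
    normalVec h.choose.1 h.choose.2 x
  else 0

/-- A canonical selection of the reflector map `𝒩_σ(x)`; at every point with a unique
supporting ellipsoid (a.e. point) this is the target point the ray `x` is reflected to. -/
noncomputable def reflMapSel (Ω D : Set E3) (ρ : E3 → ℝ) (x : E3) : E3 :=
  if h : ∃ p : E3 × ℝ, p.1 ∈ D ∧ IsSupportingAt Ω ρ p.1 p.2 x then h.choose.1 else 0

/-- The reflector measure `μ(E) = ∫_{τ_σ(E)} f(x) (x·ν(x))/ρ(x)² dx`,
the irradiance received on `E ⊆ D`. -/
noncomputable def reflMeasure (Ω D : Set E3) (ρ f : E3 → ℝ) (E : Set E3) : ℝ :=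
  ∫ x in tracing Ω ρ E, f x * rinner x (nuSel Ω D ρ x) / ρ x ^ 2 ∂μH[2]

lemma cconst_pos (t : ℝ) : 0 < cconst t :=
  sub_pos.2 (Real.lt_sqrt_of_sq_lt (by linarith))

lemma cconst_lt_one {t : ℝ} (ht : 0 < t) : cconst t < 1 := by
  have : √(1 + t ^ 2) < 1 + t := (Real.sqrt_lt' (by linarith)).2 (by nlinarith)
  unfold cconst; linarith

lemma cconst_eq_inv (t : ℝ) : cconst t = (√(1 + t ^ 2) + t)⁻¹ := by
  refine eq_inv_of_mul_eq_one_left ?_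
  rw [cconst]
  linear_combination Real.sq_sqrt (by positivity : (0 : ℝ) ≤ 1 + t ^ 2)

lemma cconst_antitoneOn : AntitoneOn cconst (Ici 0) := by
  intro s (hs : 0 ≤ s) t _ hst
  rw [cconst_eq_inv, cconst_eq_inv]
  exact inv_anti₀ (by positivity) (add_le_add (Real.sqrt_le_sqrt (by nlinarith)) hst)

lemma cconst_sq_add_two_mul_self (t : ℝ) : cconst t ^ 2 + 2 * cconst t * t = 1 := by
  unfold cconst
  linear_combination Real.sq_sqrt (by positivity : (0 : ℝ) ≤ 1 + t ^ 2)

lemma ecc_eq_cconst (P : E3) (d : ℝ) : ecc P d = cconst (d / ‖P‖) := by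
  rw [ecc, cconst, div_pow]

section Ellipsoid

variable {P : E3} {d : ℝ}

lemma ecc_pos : 0 < ecc P d := ecc_eq_cconst P d ▸ cconst_pos _

lemma ecc_lt_one (hP : P ≠ 0) (hd : 0 < d) : ecc P d < 1 :=
  ecc_eq_cconst P d ▸ cconst_lt_one (div_pos hd (norm_pos_iff.2 hP))

lemma ecc_le_cconst {δ : ℝ} (hP : P ≠ 0) (hδ : 0 ≤ δ) (hd : δ * ‖P‖ ≤ d) :
    ecc P d ≤ cconst δ := by
  have hδd : δ ≤ d / ‖P‖ := (le_div_iff₀ (norm_pos_iff.2 hP)).2 hd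
  rw [ecc_eq_cconst]
  exact cconst_antitoneOn hδ (hδ.trans hδd) hδd

lemma two_mul_ecc_mul (hP : P ≠ 0) : 2 * ecc P d * d = ‖P‖ * (1 - ecc P d ^ 2) := by
  have h := cconst_sq_add_two_mul_self (d / ‖P‖)
  rw [← ecc_eq_cconst] at h
  field_simp [norm_ne_zero_iff.2 hP] at h
  linear_combination h

lemma norm_axisDir (hP : P ≠ 0) : ‖axisDir P‖ = 1 := by
  rw [axisDir, norm_smul, norm_inv, norm_norm, inv_mul_cancel₀ (norm_ne_zero_iff.2 hP)]

lemma abs_rinner_axisDir_le {x : E3} (hx : ‖x‖ = 1) (hP : P ≠ 0) :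
    |rinner x (axisDir P)| ≤ 1 := by
  simpa [rinner, hx, norm_axisDir hP] using abs_real_inner_le_norm x (axisDir P)

lemma div_one_add_ecc_le_polarRadius (hP : P ≠ 0) (hd : 0 < d) {x : E3} (hx : ‖x‖ = 1) :
    d / (1 + ecc P d) ≤ polarRadius P d x := by
  have hε0 : 0 < ecc P d := ecc_pos
  have hε1 := ecc_lt_one hP hd
  obtain ⟨hlo, hhi⟩ := abs_le.1 (abs_rinner_axisDir_le hx hP)
  exact div_le_div_of_nonneg_left hd.le (by nlinarith) (by nlinarith)

lemma polarRadius_le_div_one_sub_ecc (hP : P ≠ 0) (hd : 0 < d) {x : E3} (hx : ‖x‖ = 1) :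
    polarRadius P d x ≤ d / (1 - ecc P d) := by
  have hε0 : 0 < ecc P d := ecc_pos
  have hε1 := ecc_lt_one hP hd
  obtain ⟨hlo, hhi⟩ := abs_le.1 (abs_rinner_axisDir_le hx hP)
  exact div_le_div_of_nonneg_left hd.le (by linarith) (by nlinarith)

lemma abs_rinner_sub_rinner_axisDir_le (hP : P ≠ 0) (x y : E3) :
    |rinner x (axisDir P) - rinner y (axisDir P)| ≤ ‖x - y‖ := by
  simpa [rinner, ← inner_sub_left, norm_axisDir hP] using
    abs_real_inner_le_norm (x - y) (axisDir P)

lemma abs_polarRadius_sub_le (hP : P ≠ 0) (hd : 0 < d) {x y : E3} (hx : ‖x‖ = 1)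
    (hy : ‖y‖ = 1) :
    |polarRadius P d x - polarRadius P d y| ≤
      ‖P‖ / 2 * ((1 + ecc P d) / (1 - ecc P d)) * ‖x - y‖ := by
  set ε := ecc P d
  set a := rinner x (axisDir P)
  set b := rinner y (axisDir P)
  have hε0 : 0 < ε := ecc_pos
  have hε1 : ε < 1 := ecc_lt_one hP hd
  obtain ⟨ha₁, ha₂⟩ := abs_le.1 (abs_rinner_axisDir_le hx hP)
  obtain ⟨hb₁, hb₂⟩ := abs_le.1 (abs_rinner_axisDir_le hy hP)
  have hqa : 1 - ε ≤ 1 - ε * a := by nlinarith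
  have hqb : 1 - ε ≤ 1 - ε * b := by nlinarith
  have hdiff : polarRadius P d x - polarRadius P d y =
      d * ε * (a - b) / ((1 - ε * a) * (1 - ε * b)) := by
    rw [polarRadius, polarRadius, div_sub_div _ _ (by linarith) (by linarith)]
    ring
  calc |polarRadius P d x - polarRadius P d y|
      = d * ε * |a - b| / ((1 - ε * a) * (1 - ε * b)) := by
        rw [hdiff, abs_div, abs_mul, abs_of_pos (by positivity : 0 < d * ε),
          abs_of_pos (by nlinarith : 0 < (1 - ε * a) * (1 - ε * b))]
    _ ≤ d * ε * ‖x - y‖ / ((1 - ε) * (1 - ε)) := by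
        gcongr
        · exact abs_rinner_sub_rinner_axisDir_le hP x y
        · linarith
    _ = ‖P‖ / 2 * ((1 + ε) / (1 - ε)) * ‖x - y‖ := by
        field_simp [(by linarith : 1 - ε ≠ 0)]
        linear_combination ‖x - y‖ * two_mul_ecc_mul (d := d) hP

lemma ecc_le_cconst_of_le {δ M : ℝ} (hP : P ≠ 0) (hδ : 0 ≤ δ) (hPM : ‖P‖ ≤ M)
    (hdM : δ * M ≤ d) : ecc P d ≤ cconst δ :=
  ecc_le_cconst hP hδ ((mul_le_mul_of_nonneg_left hPM hδ).trans hdM)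

lemma mul_div_one_add_cconst_le_polarRadius {δ M : ℝ} (hP : P ≠ 0) (hd : 0 < d) (hδ : 0 ≤ δ)
    (hPM : ‖P‖ ≤ M) (hdM : δ * M ≤ d) {x : E3} (hx : ‖x‖ = 1) :
    δ * M / (1 + cconst δ) ≤ polarRadius P d x :=
  calc δ * M / (1 + cconst δ)
      ≤ d / (1 + ecc P d) :=
        div_le_div₀ hd.le hdM (by linarith [ecc_pos (P := P) (d := d)])
          (by linarith [ecc_le_cconst_of_le hP hδ hPM hdM])
    _ ≤ polarRadius P d x := div_one_add_ecc_le_polarRadius hP hd hx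

lemma abs_polarRadius_sub_le_of_le {δ M : ℝ} (hP : P ≠ 0) (hd : 0 < d) (hδ : 0 < δ)
    (hPM : ‖P‖ ≤ M) (hdM : δ * M ≤ d) {x y : E3} (hx : ‖x‖ = 1) (hy : ‖y‖ = 1) :
    |polarRadius P d x - polarRadius P d y| ≤
      M / 2 * ((1 + cconst δ) / (1 - cconst δ)) * ‖x - y‖ := by
  have hε := ecc_le_cconst_of_le hP hδ.le hPM hdM
  calc |polarRadius P d x - polarRadius P d y|
      ≤ ‖P‖ / 2 * ((1 + ecc P d) / (1 - ecc P d)) * ‖x - y‖ :=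
        abs_polarRadius_sub_le hP hd hx hy
    _ ≤ M / 2 * ((1 + cconst δ) / (1 - cconst δ)) * ‖x - y‖ := by
        gcongr
        · exact div_nonneg (by linarith [ecc_pos (P := P) (d := d)])
            (by linarith [ecc_lt_one hP hd])
        · linarith [norm_nonneg P]
        · linarith [cconst_pos δ]
        · linarith [cconst_lt_one hδ]

end Ellipsoid

theorem classA_lower_bound_bounded_and_lipschitz_general
    (Ω : Set E3) (hΩ : Ω ⊆ sphere2)
    (D : Set E3)
    (M : ℝ) (hM : IsGreatest ((fun p : E3 => ‖p‖) '' D) M)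
    (δ : ℝ) (hδ : 0 < δ)
    (ρ : E3 → ℝ) (hσ : InClassA Ω D ρ δ M) :
    (∀ x ∈ closure Ω, δ * M / (1 + cconst δ) ≤ ρ x) ∧
    (∃ B : ℝ, ∀ x ∈ closure Ω, ρ x ≤ B) ∧
    (∀ x ∈ closure Ω, ∀ y ∈ closure Ω,
      |ρ x - ρ y| ≤ M / 2 * ((1 + cconst δ) / (1 - cconst δ)) * ‖x - y‖) := by
  obtain ⟨-, hA⟩ := hσ
  have hsph : ∀ x ∈ closure Ω, ‖x‖ = 1 := fun x hx =>
    mem_sphere_zero_iff_norm.1 (closure_minimal hΩ isClosed_sphere hx)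
  have hPM : ∀ P ∈ D, ‖P‖ ≤ M := fun P hPD => hM.2 (mem_image_of_mem _ hPD)
  have hsub : ∀ x ∈ closure Ω, ∀ y ∈ closure Ω,
      ρ x - ρ y ≤ M / 2 * ((1 + cconst δ) / (1 - cconst δ)) * ‖x - y‖ := by
    intro x hx y hy
    obtain ⟨P, hPD, d, hdM, hP, hd, hle, hρ⟩ := hA y hy
    have hρd := abs_polarRadius_sub_le_of_le hP hd hδ (hPM P hPD) hdM (hsph x hx) (hsph y hy)
    linarith [hle x hx, le_abs_self (polarRadius P d x - polarRadius P d y)]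
  refine ⟨fun x hx => ?_, ?_, fun x hx y hy =>
    abs_sub_le_iff.2 ⟨hsub x hx y hy, norm_sub_rev x y ▸ hsub y hy x hx⟩⟩
  · obtain ⟨P, hPD, d, hdM, hP, hd, -, hρ⟩ := hA x hx
    exact hρ ▸ mul_div_one_add_cconst_le_polarRadius hP hd hδ.le (hPM P hPD) hdM (hsph x hx)
  · rcases (closure Ω).eq_empty_or_nonempty with hempty | ⟨x₀, hx₀⟩
    · exact ⟨0, by simp [hempty]⟩
    obtain ⟨P, -, d, -, hP, hd, hle, -⟩ := hA x₀ hx₀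
    exact ⟨d / (1 - ecc P d), fun x hx =>
      (hle x hx).trans (polarRadius_le_div_one_sub_ecc hP hd (hsph x hx))⟩

/-- A reflector in the class `A(δ)` is bounded below by `δM/(1 + c_δ)`,
bounded above, and globally Lipschitz with constant `(M/2)(1 + c_δ)/(1 − c_δ)`. -/
theorem classA_lower_bound_bounded_and_lipschitz
    (Ω : Set E3) (hΩ : Ω ⊆ sphere2) (hfr : μH[2] (sphFrontier Ω) = 0)
    (D : Set E3) (hD : IsCompact D) (hO : (0 : E3) ∉ D)
    (M : ℝ) (hM : IsGreatest ((fun p : E3 => ‖p‖) '' D) M)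
    (δ : ℝ) (hδ : 0 < δ)
    (ρ : E3 → ℝ) (hσ : InClassA Ω D ρ δ M) :
    (∀ x ∈ closure Ω, δ * M / (1 + cconst δ) ≤ ρ x) ∧
    (∃ B : ℝ, ∀ x ∈ closure Ω, ρ x ≤ B) ∧
    (∀ x ∈ closure Ω, ∀ y ∈ closure Ω,
      |ρ x - ρ y| ≤ M / 2 * ((1 + cconst δ) / (1 - cconst δ)) * ‖x - y‖) :=
  classA_lower_bound_bounded_and_lipschitz_general Ω hΩ D M hM δ hδ ρ hσ
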